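/- For |q| < 1 and |x| < 1 and any complex a, the Cauchy product identity $\Big(\sum_{i=0}^\infty \frac{(aq;q)_i}{(q;q)_i} x^i\Big)\Big(\sum_{j=0}^\infty \frac{(q/a;q)_j}{(q;q)_j} (ax)^j\Big) = \frac{1}{(1-x)(1-ax)}$ holds, assuming $a \neq 0$ and |ax| < 1. -/

import Mathlib

open Finset

noncomputable def qPoch (a q : ℂ) (n : ℕ) : ℂ := ∏ j ∈ Finset.range n, (1 - a * q ^ j)

noncomputable def qPochInf (a q : ℂ) : ℂ := ∏' j : ℕ, (1 - a * q ^ j)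

noncomputable def phi (a b c q x : ℂ) : ℂ :=
  ∑' i : ℕ, qPoch a q i * qPoch b q i / (qPoch q q i * qPoch c q i) * x ^ i

/-! Write `F(x) = ∑ (aq;q)ᵢ/(q;q)ᵢ xⁱ` and `G(x) = ∑ (q/a;q)ⱼ/(q;q)ⱼ (ax)ʲ`. The coefficient
recurrences of these q-binomial series say `(1 - x) F(x) = (1 - aqx) F(qx)` and
`(1 - ax) G(x) = (1 - qx) G(qx)`, so `P(x) = (1 - x)(1 - ax) F(x) G(x)` satisfies `P(qx) = P(x)`.
As a formal power series this forces `P` to be constant, since `q` is not a root of unity;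
hence `P = 1` and `F G = ∑ xⁱ ∑ (ax)ʲ` formally. The ratio test makes all four series absolutely
convergent, and evaluating a product of absolutely convergent power series is multiplicative. -/

open PowerSeries Filter Topology

namespace PowerSeries

theorem tsum_coeff_mul_mul_pow {R : Type*} [NormedCommRing R] [CompleteSpace R] {f g : R⟦X⟧}
    {x : R} (hf : Summable fun n ↦ ‖coeff n f * x ^ n‖)
    (hg : Summable fun n ↦ ‖coeff n g * x ^ n‖) :
    ∑' n, coeff n (f * g) * x ^ n = (∑' n, coeff n f * x ^ n) * ∑' n, coeff n g * x ^ n := by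
  rw [tsum_mul_tsum_eq_tsum_sum_antidiagonal_of_summable_norm hf hg]
  refine tsum_congr fun n ↦ ?_
  rw [coeff_mul, sum_mul]
  refine sum_congr rfl fun p hp ↦ ?_
  rw [← mem_antidiagonal.mp hp, pow_add]
  ring

theorem summable_norm_coeff_mk_one_mul_pow {K : Type*} [NormedField K] {x : K} (hx : ‖x‖ < 1) :
    Summable fun n ↦ ‖coeff n (mk 1 : K⟦X⟧) * x ^ n‖ := by
  simpa only [coeff_mk, Pi.one_apply, one_mul, norm_pow] using
    summable_geometric_of_lt_one (norm_nonneg x) hx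

theorem tsum_coeff_mk_one_mul_pow {K : Type*} [NormedField K] [CompleteSpace K] {x : K}
    (hx : ‖x‖ < 1) : ∑' n, coeff n (mk 1 : K⟦X⟧) * x ^ n = (1 - x)⁻¹ := by
  simp only [coeff_mk, Pi.one_apply, one_mul]
  exact tsum_geometric_of_norm_lt_one hx

theorem coeff_rescale_mul_pow {R : Type*} [CommSemiring R] (f : R⟦X⟧) (a x : R) (n : ℕ) :
    coeff n (rescale a f) * x ^ n = coeff n f * (a * x) ^ n := by
  rw [coeff_rescale, mul_pow]
  ring

@[simp]
theorem constantCoeff_rescale {R : Type*} [CommSemiring R] (a : R) (f : R⟦X⟧) :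
    constantCoeff (rescale a f) = constantCoeff f := by
  rw [← coeff_zero_eq_constantCoeff_apply, coeff_rescale, pow_zero, one_mul,
    coeff_zero_eq_constantCoeff_apply]

theorem rescale_one_sub_X {R : Type*} [CommRing R] (a : R) :
    rescale a (1 - X) = 1 - C a * X := by
  rw [map_sub, map_one, rescale_X]

theorem rescale_one_sub_C_mul_X {R : Type*} [CommRing R] (a b : R) :
    rescale a (1 - C b * X) = 1 - C (b * a) * X := by
  have hC : rescale a (C b) = C b := by
    ext (_ | n) <;> simp [coeff_C]
  rw [map_sub, map_one, map_mul, rescale_X, hC, map_mul, mul_assoc]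

theorem eq_C_of_rescale_eq {R : Type*} [CommRing R] [NoZeroDivisors R] {q : R}
    (hq : ¬IsOfFinOrder q) {f : R⟦X⟧} (hf : rescale q f = f) : f = C (constantCoeff f) := by
  ext (_ | n)
  · simp
  · have hqn : q ^ (n + 1) ≠ 1 := fun h ↦
      hq (isOfFinOrder_iff_pow_eq_one.mpr ⟨n + 1, n.succ_pos, h⟩)
    have h := congrArg (coeff (n + 1)) hf
    rw [coeff_rescale] at h
    have : (q ^ (n + 1) - 1) * coeff (n + 1) f = 0 := by linear_combination h
    simpa [coeff_C, sub_eq_zero, hqn] using this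

end PowerSeries

theorem not_isOfFinOrder_of_norm_lt_one {R : Type*} [NormedRing R] [NormMulClass R]
    [NormOneClass R] {q : R} (hq : ‖q‖ < 1) : ¬IsOfFinOrder q :=
  fun h ↦ hq.ne h.norm_eq_one

theorem qPoch_succ (b q : ℂ) (n : ℕ) : qPoch b q (n + 1) = qPoch b q n * (1 - b * q ^ n) :=
  prod_range_succ _ _

theorem qPoch_self_ne_zero {q : ℂ} (hq : ¬IsOfFinOrder q) (n : ℕ) : qPoch q q n ≠ 0 := by
  refine prod_ne_zero_iff.mpr fun j _ h ↦
    hq (isOfFinOrder_iff_pow_eq_one.mpr ⟨j + 1, j.succ_pos, ?_⟩)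
  linear_combination pow_succ' q j - h

-- The q-binomial theorem identifies this series with `(bx;q)_∞ / (x;q)_∞` when `‖q‖ < 1`.
noncomputable def qBinomialSeries (b q : ℂ) : ℂ⟦X⟧ :=
  mk fun n ↦ qPoch b q n / qPoch q q n

@[simp]
theorem coeff_qBinomialSeries (b q : ℂ) (n : ℕ) :
    coeff n (qBinomialSeries b q) = qPoch b q n / qPoch q q n :=
  coeff_mk _ _

@[simp]
theorem constantCoeff_qBinomialSeries (b q : ℂ) : constantCoeff (qBinomialSeries b q) = 1 := by
  simp [← coeff_zero_eq_constantCoeff_apply, -coeff_zero_eq_constantCoeff, qPoch]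

theorem coeff_qBinomialSeries_succ_mul {q : ℂ} (hq : ¬IsOfFinOrder q) (b : ℂ) (n : ℕ) :
    coeff (n + 1) (qBinomialSeries b q) * (1 - q ^ (n + 1)) =
      coeff n (qBinomialSeries b q) * (1 - b * q ^ n) := by
  have h := qPoch_self_ne_zero hq (n + 1)
  rw [qPoch_succ, ← pow_succ'] at h
  obtain ⟨hpoch, hfactor⟩ := mul_ne_zero_iff.mp h
  simp only [coeff_qBinomialSeries, qPoch_succ, ← pow_succ']
  field_simp

theorem one_sub_X_mul_qBinomialSeries {q : ℂ} (hq : ¬IsOfFinOrder q) (b : ℂ) :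
    (1 - X) * qBinomialSeries b q = (1 - C b * X) * rescale q (qBinomialSeries b q) := by
  ext (_ | n)
  · simp
  · simp only [sub_mul, one_mul, map_sub, mul_assoc, coeff_succ_X_mul, coeff_C_mul, coeff_rescale]
    linear_combination coeff_qBinomialSeries_succ_mul hq b n

theorem summable_norm_coeff_qBinomialSeries_mul_pow {q y : ℂ} (hq : ‖q‖ < 1) (hy : ‖y‖ < 1)
    (b : ℂ) : Summable fun n ↦ ‖coeff n (qBinomialSeries b q) * y ^ n‖ := by
  obtain ⟨r, hyr, hr⟩ := exists_between hy
  have hpow : Tendsto (q ^ ·) atTop (𝓝 0) := tendsto_pow_atTop_nhds_zero_of_norm_lt_one hq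
  have hlim : Tendsto (fun n ↦ ‖1 - b * q ^ n‖ * ‖y‖ - r * ‖1 - q ^ (n + 1)‖) atTop
      (𝓝 (‖y‖ - r)) := by
    have h1 := ((tendsto_const_nhds (x := 1)).sub (hpow.const_mul b)).norm
    have h2 := ((tendsto_const_nhds (x := 1)).sub ((tendsto_add_atTop_iff_nat 1).mpr hpow)).norm
    simpa using (h1.mul_const ‖y‖).sub (h2.const_mul r)
  refine summable_of_ratio_norm_eventually_le hr ?_
  filter_upwards [hlim.eventually (gt_mem_nhds (sub_neg.mpr hyr))] with n hn
  have hq' := not_isOfFinOrder_of_norm_lt_one hq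
  have hrec := congrArg norm (coeff_qBinomialSeries_succ_mul hq' b n)
  have hpos : 0 < ‖1 - q ^ (n + 1)‖ := norm_pos_iff.mpr fun h ↦
    hq' (isOfFinOrder_iff_pow_eq_one.mpr ⟨n + 1, n.succ_pos, (sub_eq_zero.mp h).symm⟩)
  rw [norm_mul, norm_mul] at hrec
  simp only [norm_norm, norm_mul, norm_pow, pow_succ]
  refine le_of_mul_le_mul_right ?_ hpos
  calc _ = ‖coeff n (qBinomialSeries b q)‖ * ‖y‖ ^ n * (‖1 - b * q ^ n‖ * ‖y‖) := by
        linear_combination ‖y‖ ^ n * ‖y‖ * hrec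
    _ ≤ ‖coeff n (qBinomialSeries b q)‖ * ‖y‖ ^ n * (r * ‖1 - q ^ (n + 1)‖) :=
        mul_le_mul_of_nonneg_left (sub_neg.mp hn).le (by positivity)
    _ = _ := by ring

theorem qBinomialSeries_mul_rescale_qBinomialSeries {q a : ℂ} (hq : ¬IsOfFinOrder q)
    (ha : a ≠ 0) :
    qBinomialSeries (a * q) q * rescale a (qBinomialSeries (q / a) q) =
      PowerSeries.mk 1 * rescale a (PowerSeries.mk 1) := by
  set F := qBinomialSeries (a * q) q
  set G := rescale a (qBinomialSeries (q / a) q)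
  have hF : (1 - X) * F = rescale q ((1 - C a * X) * F) := by
    rw [one_sub_X_mul_qBinomialSeries hq, map_mul (rescale q), rescale_one_sub_C_mul_X]
  have hG : (1 - C a * X) * G = rescale q ((1 - X) * G) := by
    calc (1 - C a * X) * G = rescale a ((1 - X) * qBinomialSeries (q / a) q) := by
          rw [map_mul, rescale_one_sub_X]
      _ = (1 - C q * X) * rescale q G := by
          rw [one_sub_X_mul_qBinomialSeries hq, map_mul, rescale_one_sub_C_mul_X,
            div_mul_cancel₀ q ha, rescale_rescale, rescale_rescale, mul_comm q a]
      _ = rescale q ((1 - X) * G) := by rw [map_mul, rescale_one_sub_X]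
  set P := (1 - X) * (1 - C a * X) * (F * G)
  have hP : rescale q P = P := by
    calc rescale q P = rescale q ((1 - C a * X) * F) * rescale q ((1 - X) * G) := by
          rw [← map_mul]; congr 1; ring
      _ = P := by rw [← hF, ← hG]; ring
  have hP_one : P = 1 := by
    rw [eq_C_of_rescale_eq hq hP]
    simp [P, F, G]
  have hne : (1 - X) * (1 - C a * X) ≠ (0 : ℂ⟦X⟧) := fun h ↦ by
    simpa using congrArg constantCoeff h
  refine mul_right_cancel₀ hne ?_
  calc F * G * ((1 - X) * (1 - C a * X)) = P := by ring
    _ = PowerSeries.mk 1 * (1 - X) * rescale a (PowerSeries.mk 1 * (1 - X)) := by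
      rw [hP_one, mk_one_mul_one_sub_eq_one, map_one, mul_one]
    _ = PowerSeries.mk 1 * rescale a (PowerSeries.mk 1) * ((1 - X) * (1 - C a * X)) := by
      rw [map_mul, rescale_one_sub_X]; ring

theorem stmt_9 (q a x : ℂ) (hq : ‖q‖ < 1) (hx : ‖x‖ < 1) (ha : a ≠ 0)
    (hax : ‖a * x‖ < 1) :
    (∑' i : ℕ, qPoch (a * q) q i / qPoch q q i * x ^ i) *
        (∑' j : ℕ, qPoch (q / a) q j / qPoch q q j * (a * x) ^ j) =
      1 / ((1 - x) * (1 - a * x)) := by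
  have hF := summable_norm_coeff_qBinomialSeries_mul_pow hq hx (a * q)
  have hG : Summable fun n ↦ ‖coeff n (rescale a (qBinomialSeries (q / a) q)) * x ^ n‖ := by
    simpa only [coeff_rescale_mul_pow] using
      summable_norm_coeff_qBinomialSeries_mul_pow hq hax (q / a)
  have hgeom : Summable fun n ↦ ‖coeff n (rescale a (PowerSeries.mk 1)) * x ^ n‖ := by
    simpa only [coeff_rescale_mul_pow] using summable_norm_coeff_mk_one_mul_pow hax
  simp only [← coeff_qBinomialSeries, ← coeff_rescale_mul_pow]
  calc _ = ∑' n, coeff n (PowerSeries.mk 1 * rescale a (PowerSeries.mk 1)) * x ^ n := by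
        rw [← tsum_coeff_mul_mul_pow hF hG,
          qBinomialSeries_mul_rescale_qBinomialSeries (not_isOfFinOrder_of_norm_lt_one hq) ha]
    _ = (1 - x)⁻¹ * (1 - a * x)⁻¹ := by
        rw [tsum_coeff_mul_mul_pow (summable_norm_coeff_mk_one_mul_pow (K := ℂ) hx) hgeom]
        simp only [coeff_rescale_mul_pow, tsum_coeff_mk_one_mul_pow hx,
          tsum_coeff_mk_one_mul_pow hax]
    _ = 1 / ((1 - x) * (1 - a * x)) := by rw [one_div, mul_inv]
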